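/- arXiv:2312.16650 — 2 statements merged into one kernel-verified Lean document; each statement's English description precedes it below -/
import Mathlib

section
/- Let L be a finite relational language. If K is a hereditary class of L-structures that is axiomatizable (elementary, i.e., K is the class of models of some set of L-sentences), then K can be defined in terms of finite forbidden substructures: there exists a set H of finite L-structures with K = Forb(H). -/
open FirstOrder FirstOrder.Language

/-- A bundled `L`-structure: a type together with an interpretation of `L`. -/
structure Struc (L : FirstOrder.Language) where
  carrier : Type
  [str : L.Structure carrier]

attribute [instance] Struc.str

namespace Struc

variable {L : FirstOrder.Language}

/-- `B` embeds into `A`, i.e. `A` has a substructure isomorphic to `B`. -/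
def Embeds (B A : Struc L) : Prop :=
  Nonempty (B.carrier ↪[L] A.carrier)

/-- `B` and `A` are isomorphic `L`-structures. -/
def Iso (B A : Struc L) : Prop :=
  Nonempty (B.carrier ≃[L] A.carrier)

/-- The class of `L`-structures having no substructure isomorphic to a member of `H`. -/
def Forb (H : Set (Struc L)) : Set (Struc L) :=
  {A | ∀ B ∈ H, ¬ Embeds B A}

/-- A class of structures is abstract when it is closed under isomorphism. -/
def IsoClosed (K : Set (Struc L)) : Prop :=
  ∀ A B : Struc L, Iso A B → A ∈ K → B ∈ K

/-- The bundled structure corresponding to a substructure of `A`. -/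
def sub (A : Struc L) (S : L.Substructure A.carrier) : Struc L :=
  Struc.mk S

/-- A class of structures is hereditary when it is closed under substructures. -/
def Hereditary (K : Set (Struc L)) : Prop :=
  ∀ A ∈ K, ∀ S : L.Substructure A.carrier, A.sub S ∈ K

end Struc

/-- A universal (∀-) sentence: a universally quantified quantifier-free formula. -/
def IsUniversalSentence {L : FirstOrder.Language} (φ : L.Sentence) : Prop :=
  ∃ (n : ℕ) (ψ : L.BoundedFormula Empty n), ψ.IsQF ∧ φ = ψ.alls

/-- An existential (∃-) sentence: an existentially quantified quantifier-free formula. -/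
def IsExistentialSentence {L : FirstOrder.Language} (φ : L.Sentence) : Prop :=
  ∃ (n : ℕ) (ψ : L.BoundedFormula Empty n), ψ.IsQF ∧ φ = ψ.exs

open Struc in
/-- Over a finite relational language, every axiomatizable hereditary
abstract class of `L`-structures can be defined in terms of finite forbidden substructures. -/
theorem statement6 {L : FirstOrder.Language} [L.IsRelational]
    [Finite (Σ n, L.Relations n)] (K : Set (Struc L))
    (hiso : IsoClosed K) (hher : Hereditary K)
    (hax : ∃ T : L.Theory, ∀ A : Struc L, A ∈ K ↔ A.carrier ⊨ T) :
    ∃ H : Set (Struc L), (∀ B ∈ H, Finite B.carrier) ∧ K = Forb H := by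
  classical
  obtain ⟨T, hT⟩ := hax
  refine ⟨{B | Finite B.carrier ∧ B ∉ K}, fun B hB => hB.1, ?_⟩
  ext A
  constructor
  · rintro hA B hB ⟨e⟩
    exact hB.2 (hiso (A.sub e.toHom.range) B ⟨e.equivRange.symm⟩ (hher A hA _))
  · intro hA
    have key : ∀ B : Struc L, Finite B.carrier → Embeds B A → B ∈ K := by
      intro B hfin he
      by_contra h
      exact hA B ⟨hfin, h⟩ he
    by_cases hfin : Finite A.carrier
    · exact key A hfin ⟨Embedding.refl L A.carrier⟩
    · haveI : Infinite A.carrier := not_finite_iff_infinite.mp hfin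
      obtain ⟨a0⟩ : Nonempty A.carrier := inferInstance
      let S : Finset A.carrier → L.Substructure A.carrier :=
        fun t => Substructure.closure L ↑(insert a0 t)
      have hmem : ∀ (t : Finset A.carrier) (a : A.carrier), a ∈ S t ↔ a ∈ insert a0 t := by
        intro t a
        rw [Substructure.mem_closure_iff_of_isRelational]
        exact Finset.mem_coe
      let M : Finset A.carrier → Type _ := fun t => S t
      haveI : ∀ t, Nonempty (M t) :=
        fun t => ⟨⟨a0, (hmem t a0).2 (Finset.mem_insert_self _ _)⟩⟩
      have hsubK : ∀ t, A.sub (S t) ∈ K := by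
        intro t
        apply key
        · have hc : ((S t : Set A.carrier)) = ↑(insert a0 t) :=
            Substructure.closure_eq_of_isRelational _ _
          have : ((S t : Set A.carrier)).Finite := hc ▸ (insert a0 t).finite_toSet
          exact this.to_subtype
        · exact ⟨(S t).subtype⟩
      let u : Ultrafilter (Finset A.carrier) := Ultrafilter.of Filter.atTop
      have hu : ∀ s : Finset A.carrier, ∀ᶠ t in (u : Filter _), s ⊆ t :=
        fun s => Ultrafilter.of_le _ (Filter.mem_atTop s)
      let g : A.carrier → ∀ t, M t := fun a t =>
        if h : a ∈ insert a0 t then ⟨a, (hmem t a).2 h⟩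
        else ⟨a0, (hmem t a0).2 (Finset.mem_insert_self _ _)⟩
      have hg : ∀ (a : A.carrier) (t : Finset A.carrier), a ∈ t → ((g a t : A.carrier) = a) := by
        intro a t ht
        have : a ∈ insert a0 t := Finset.mem_insert_of_mem ht
        simp only [g]
        rw [dif_pos this]
      let f : A.carrier ↪[L] (u : Filter (Finset A.carrier)).Product M :=
    { toFun := fun a => (↑(g a) : (u : Filter (Finset A.carrier)).Product M)
      inj' := by
        intro a b hab
        letI := (u : Filter (Finset A.carrier)).productSetoid M
        have h1 : ∀ᶠ t in (u : Filter _), g a t = g b t := Quotient.exact' hab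
        obtain ⟨t, ⟨h1t, h2t⟩, h3t⟩ := ((h1.and (hu {a})).and (hu {b})).exists
        calc a = (g a t : A.carrier) := (hg a t (h2t (Finset.mem_singleton_self a))).symm
          _ = (g b t : A.carrier) := by rw [h1t]
          _ = b := hg b t (h3t (Finset.mem_singleton_self b))
      map_fun' := fun {n} F _ => isEmptyElim F
      map_rel' := by
        intro n r x
        letI := (u : Filter (Finset A.carrier)).productSetoid M
        have hq : (Structure.RelMap r fun k =>
              (↑(g (x k)) : (u : Filter (Finset A.carrier)).Product M)) ↔
            ∀ᶠ t in (u : Filter _), Structure.RelMap r fun k => g (x k) t :=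
          relMap_quotient_mk' _ r (fun k => g (x k))
        have hs : ∀ᶠ t in (u : Filter _), Finset.image x Finset.univ ⊆ t :=
          hu _
        have hcoe : ∀ t : Finset A.carrier, Finset.image x Finset.univ ⊆ t →
            (fun k => ((g (x k) t : A.carrier))) = x := by
          intro t ht
          funext k
          exact hg (x k) t (ht (Finset.mem_image_of_mem x (Finset.mem_univ k)))
        constructor
        · intro h
          obtain ⟨t, h1, h2⟩ := ((hq.1 h).and hs).exists
          have h1' : Structure.RelMap r (fun k => ((g (x k) t : A.carrier))) := h1
          rwa [hcoe t h2] at h1'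
        · intro h
          apply hq.2
          filter_upwards [hs] with t ht
          show Structure.RelMap r (fun k => ((g (x k) t : A.carrier)))
          rw [hcoe t ht]
          exact h }
      have hPT : ((u : Filter (Finset A.carrier)).Product M) ⊨ T := by
        rw [Theory.model_iff]
        intro φ hφ
        rw [Ultraproduct.sentence_realize]
        apply Filter.Eventually.of_forall
        intro t
        have hm := (hT (A.sub (S t))).1 (hsubK t)
        rw [Theory.model_iff] at hm
        exact hm φ hφ
      let P : Struc L := ⟨(u : Filter (Finset A.carrier)).Product M⟩
      have hP : P ∈ K := (hT P).2 hPT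
      exact hiso (P.sub f.toHom.range) A ⟨f.equivRange.symm⟩ (hher P hP _)
end

section
/- Let L be a finite relational language. A hereditary abstract class K of L-structures is axiomatizable if and only if K = Forb(H) for some set H of finite L-structures. -/
open FirstOrder FirstOrder.Language

/-!
For finite `B`, "`B` embeds" is the existential closure of the atomic diagram of `B`, a single
first-order sentence because `B` and `L` are finite; so `Forb H` is axiomatized by the negations of
these sentences.

Conversely, let `K` be axiomatized by `T` and let `H` be the finite structures outside `K`. A
structure `A` in `Forb H` has all its finite substructures in `K`, i.e. models of `T`. For an
ultrafilter on the finite subsets of `A` refining `atTop`, `A` embeds into the ultraproduct of these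
substructures, which models `T` by Łoś's theorem; heredity then puts `A` in `K`.
-/

namespace FirstOrder.Language

open Structure Filter

universe w

variable {L : Language}

theorem Formula.realize_ite_top_bot {α M : Type*} [L.Structure M] {v : α → M} (P : Prop)
    [Decidable P] : (if P then ⊤ else ⊥ : L.Formula α).Realize v ↔ P := by
  split_ifs <;> simp [*]

section AtomicDiagram

variable [Finite (Σ n, L.Relations n)] (β : Type*) [Finite β] [L.Structure β]

open Classical in
noncomputable def atomicDiagram : L.Formula β :=
  Formula.iInf (fun p : β × β =>
      (Term.equal (Term.var p.1) (Term.var p.2)).iff (if p.1 = p.2 then ⊤ else ⊥)) ⊓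
    Formula.iInf (fun q : Σ R : Σ n, L.Relations n, Fin R.1 → β =>
      (q.1.2.formula (Term.var ∘ q.2)).iff (if RelMap q.1.2 q.2 then ⊤ else ⊥))

variable {β} in
theorem realize_atomicDiagram {M : Type*} [L.Structure M] {v : β → M} :
    (atomicDiagram (L := L) β).Realize v ↔ (∀ a b, v a = v b ↔ a = b) ∧
      ∀ (n : ℕ) (R : L.Relations n) (x : Fin n → β), RelMap R (v ∘ x) ↔ RelMap R x := by
  simp only [atomicDiagram, Formula.realize_inf, Formula.realize_iInf, Formula.realize_iff,
    Formula.realize_ite_top_bot, Formula.realize_equal, Term.realize_var, Prod.forall,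
    Sigma.forall, Formula.realize_rel, Function.comp_apply]
  exact Iff.rfl

noncomputable def embeddingSentence : L.Sentence :=
  Formula.iExs β ((atomicDiagram β).relabel Sum.inr)

theorem realize_embeddingSentence [L.IsRelational] {M : Type*} [L.Structure M] :
    M ⊨ embeddingSentence (L := L) β ↔ Nonempty (β ↪[L] M) := by
  simp only [Sentence.Realize, embeddingSentence, Formula.realize_iExs, Formula.realize_relabel,
    Sum.elim_comp_inr, realize_atomicDiagram]
  constructor
  · rintro ⟨v, hinj, hrel⟩
    exact ⟨⟨⟨v, fun a b h => (hinj a b).1 h⟩, fun f => isEmptyElim f, fun R x => hrel _ R x⟩⟩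
  · rintro ⟨e⟩
    exact ⟨e, fun a b => e.injective.eq_iff, fun _ R x => e.map_rel R x⟩

end AtomicDiagram

section Ultraproduct

variable {M : Type w} [L.Structure M]

theorem Substructure.nonempty_embedding_ultraproduct {ι : Type*} (u : Ultrafilter ι)
    (S : ι → L.Substructure M) [∀ i, Nonempty (S i)] (hS : ∀ a, ∀ᶠ i in u, a ∈ S i) :
    Nonempty (M ↪[L] (u : Filter ι).Product fun i => S i) := by
  classical
  let f : M → ∀ i, S i := fun a i => if h : a ∈ S i then ⟨a, h⟩ else Classical.arbitrary _
  have hf : ∀ a, ∀ᶠ i in u, (f a i : M) = a := fun a =>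
    (hS a).mono fun i h => by simp [f, h]
  have hfx : ∀ {n} (x : Fin n → M), ∀ᶠ i in u, ∀ j, (f (x j) i : M) = x j := fun x =>
    eventually_all.2 fun j => hf (x j)
  refine ⟨⟨⟨fun a => (f a : (u : Filter ι).Product fun i => S i), fun a b hab => ?_⟩, ?_, ?_⟩⟩
  · obtain ⟨i, hai, hbi, hi⟩ := ((hf a).and ((hf b).and (Quotient.exact hab))).exists
    rw [← hai, ← hbi, hi]
  · intro n F x
    change _ = funMap F fun j => ((f (x j) : ∀ i, S i) : (u : Filter ι).Product fun i => S i)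
    rw [Ultraproduct.funMap_cast]
    refine Quotient.sound ((hf (funMap F x)).and (hfx x) |>.mono fun i ⟨h, hx⟩ => ?_)
    apply Subtype.ext
    rw [h]
    change _ = funMap F fun j => (f (x j) i : M)
    simp only [hx]
  · intro n R x
    change (RelMap R fun j => ((f (x j) : ∀ i, S i) : (u : Filter ι).Product fun i => S i)) ↔ _
    erw [relMap_quotient_mk']
    change (∀ᶠ i in u, RelMap R fun j => (f (x j) i : M)) ↔ _
    refine Iff.trans ?_ (eventually_const (f := (u : Filter ι)))
    exact eventually_congr ((hfx x).mono fun i hx => by simp only [hx])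

theorem Theory.exists_modelType_embedding_of_fg_substructures_model [Nonempty M] (T : L.Theory)
    (h : ∀ S : L.Substructure M, S.FG → S ⊨ T) :
    ∃ N : T.ModelType.{_, _, w}, Nonempty (M ↪[L] N) := by
  obtain ⟨a₀⟩ := ‹Nonempty M›
  -- `a₀` keeps every factor nonempty, as Łoś's theorem requires.
  let S : Finset M → L.Substructure M := fun s => Substructure.closure L (insert a₀ ↑s)
  have hsub : ∀ s : Finset M, insert a₀ (s : Set M) ⊆ S s := fun s => Substructure.subset_closure
  have : ∀ s, Nonempty (S s) := fun s => ⟨⟨a₀, hsub s (Set.mem_insert _ _)⟩⟩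
  let u : Ultrafilter (Finset M) := Ultrafilter.of atTop
  have hS : ∀ a, ∀ᶠ s in (u : Filter (Finset M)), a ∈ S s := fun a =>
    Ultrafilter.of_le _ <| eventually_atTop.2
      ⟨{a}, fun s hs => hsub s (Set.mem_insert_of_mem _ (hs (Finset.mem_singleton_self a)))⟩
  have : (u : Filter (Finset M)).Product (fun s => S s) ⊨ T :=
    (Theory.model_iff _).2 fun φ hφ => (Ultraproduct.sentence_realize φ).2 <|
      Eventually.of_forall fun s =>
        (h (S s) (Substructure.fg_closure (s.finite_toSet.insert a₀))).realize_of_mem φ hφ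
  exact ⟨.of T ((u : Filter (Finset M)).Product fun s => S s),
    Substructure.nonempty_embedding_ultraproduct u S hS⟩

end Ultraproduct

end FirstOrder.Language

namespace Struc

variable {L : Language} {K : Set (Struc L)}

theorem Hereditary.mem_of_embeds (hher : Hereditary K) (hiso : IsoClosed K) {A B : Struc L}
    (hBA : Embeds B A) (hA : A ∈ K) : B ∈ K := by
  obtain ⟨g⟩ := hBA
  exact hiso (A.sub g.toHom.range) B ⟨g.equivRange.symm⟩ (hher A hA g.toHom.range)

theorem exists_theory_forb [L.IsRelational] [Finite (Σ n, L.Relations n)] (H : Set (Struc L))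
    (hH : ∀ B ∈ H, Finite B.carrier) : ∃ T : L.Theory, ∀ A : Struc L, A ∈ Forb H ↔ A.carrier ⊨ T :=
  ⟨Set.range fun B : H => haveI := hH B B.2; ∼(embeddingSentence B.1.carrier), fun A => by
    simp only [Forb, Embeds, Set.mem_ofPred_eq, Theory.model_iff, Set.forall_mem_range,
      Sentence.realize_not, realize_embeddingSentence, Subtype.forall]⟩

theorem eq_forb_of_axiomatizable [L.IsRelational] (hiso : IsoClosed K) (hher : Hereditary K)
    {T : L.Theory} (hT : ∀ A : Struc L, A ∈ K ↔ A.carrier ⊨ T) :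
    K = Forb {B | Finite B.carrier ∧ B ∉ K} := by
  ext A
  refine ⟨fun hA B ⟨_, hBK⟩ hBA => hBK (hher.mem_of_embeds hiso hBA hA), fun hA => ?_⟩
  have hfin : ∀ S : L.Substructure A.carrier, Finite S → A.sub S ∈ K := fun S hS =>
    by_contra fun hSK => hA (A.sub S) ⟨hS, hSK⟩ ⟨S.subtype⟩
  rcases finite_or_infinite A.carrier with hAfin | hAinf
  · exact hiso _ A ⟨Substructure.topEquiv⟩ (hfin ⊤ inferInstance)
  · obtain ⟨N, ⟨e⟩⟩ := T.exists_modelType_embedding_of_fg_substructures_model (M := A.carrier)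
      fun S hS => (hT (A.sub S)).1 (hfin S hS.finite)
    exact hher.mem_of_embeds hiso ⟨e⟩ ((hT ⟨N⟩).2 N.is_model)

end Struc

open Struc in
/-- Over a finite relational language, a hereditary abstract class `K` of
`L`-structures is axiomatizable iff `K = Forb H` for some set `H` of finite `L`-structures. -/
theorem statement7 {L : FirstOrder.Language} [L.IsRelational]
    [Finite (Σ n, L.Relations n)] (K : Set (Struc L))
    (hiso : IsoClosed K) (hher : Hereditary K) :
    (∃ T : L.Theory, ∀ A : Struc L, A ∈ K ↔ A.carrier ⊨ T) ↔
      ∃ H : Set (Struc L), (∀ B ∈ H, Finite B.carrier) ∧ K = Forb H := by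
  constructor
  · rintro ⟨T, hT⟩
    exact ⟨_, fun B hB => hB.1, eq_forb_of_axiomatizable hiso hher hT⟩
  · rintro ⟨H, hH, rfl⟩
    exact exists_theory_forb H hH
end
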